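/- D(G_2(q)) = (E_2(q)·G_2(q) − 2·G_2(q)² + E_4(q))/6 in ℚ⟦q⟧. -/

import Mathlib

open PowerSeries Finset

noncomputable section

/-- The operator `D = q·d/dq` on `ℚ⟦q⟧`, coefficientwise `aₙ ↦ n·aₙ`. -/
def Dq (F : ℚ⟦X⟧) : ℚ⟦X⟧ := PowerSeries.mk fun n => (n : ℚ) * coeff n F

/-- `E₂(q) = 1 - 24 Σ_{n≥1} σ₁(n) qⁿ`. -/
def E2 : ℚ⟦X⟧ := PowerSeries.mk fun n => if n = 0 then 1 else -24 * ∑ d ∈ n.divisors, (d : ℚ)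

/-- `E₄(q) = 1 + 240 Σ_{n≥1} σ₃(n) qⁿ`. -/
def E4 : ℚ⟦X⟧ := PowerSeries.mk fun n => if n = 0 then 1 else 240 * ∑ d ∈ n.divisors, (d : ℚ) ^ 3

/-- `E₆(q) = 1 - 504 Σ_{n≥1} σ₅(n) qⁿ`. -/
def E6 : ℚ⟦X⟧ := PowerSeries.mk fun n => if n = 0 then 1 else -504 * ∑ d ∈ n.divisors, (d : ℚ) ^ 5

/-- `∏_{k≥1} (1 - qᵏ)`, defined coefficientwise by truncated finite products
(factors with `k > N` do not affect the `N`-th coefficient). -/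
def eulerProd : ℚ⟦X⟧ :=
  PowerSeries.mk fun N => coeff N (∏ k ∈ Finset.Icc 1 N, (1 - X ^ k : ℚ⟦X⟧))

/-- `Σ_{n ∈ ℤ} (-1)ⁿ (6n+1)^{2t} q^{n(3n+1)/2}` (any `n` with `n(3n+1)/2 = N`
satisfies `|n| ≤ N`). -/
def pentagonalSum (t : ℕ) : ℚ⟦X⟧ := PowerSeries.mk fun N =>
  ∑ n ∈ Finset.Icc (-(N : ℤ)) (N : ℤ),
    if n * (3 * n + 1) = 2 * N then (-1 : ℚ) ^ n * ((6 * n + 1 : ℤ) : ℚ) ^ (2 * t) else 0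

/-- `θ₂(q)⁴ = 16 q (Σ_{n≥0} q^{n(n+1)})⁴`. -/
def theta2four : ℚ⟦X⟧ :=
  16 * X * (PowerSeries.mk fun N => ∑ n ∈ Finset.range (N + 1),
    if n * (n + 1) = N then (1 : ℚ) else 0) ^ 4

/-- `θ₃(q) = 1 + 2 Σ_{n≥1} q^{n²}`. -/
def theta3 : ℚ⟦X⟧ :=
  1 + 2 * PowerSeries.mk fun N => ∑ n ∈ Finset.Icc 1 N, if n ^ 2 = N then (1 : ℚ) else 0

/-- `θ₄(q) = 1 + 2 Σ_{n≥1} (-1)ⁿ q^{n²}`. -/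
def theta4 : ℚ⟦X⟧ :=
  1 + 2 * PowerSeries.mk fun N => ∑ n ∈ Finset.Icc 1 N, if n ^ 2 = N then (-1 : ℚ) ^ n else 0

/-- `Θ_{r,s} = θ₂^{4r} θ₃^{4s} + θ₂^{4s} θ₃^{4r}`. -/
def Theta (r s : ℕ) : ℚ⟦X⟧ :=
  theta2four ^ r * theta3 ^ (4 * s) + theta2four ^ s * theta3 ^ (4 * r)

/-- MacMahon's `C_{2t}(q) = Σ_{0<s₁<⋯<s_t} q^{Σ(2sᵢ-1)} ∏ (1-q^{2sᵢ-1})⁻²`,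
defined coefficientwise: tuples with some `sᵢ > N+1` do not affect the `N`-th coefficient. -/
def Cmac (t : ℕ) : ℚ⟦X⟧ := PowerSeries.mk fun N =>
  coeff N (∑ S ∈ (Finset.Icc 1 (N + 1)).powersetCard t,
    ∏ s ∈ S, (X ^ (2 * s - 1) * ((1 - X ^ (2 * s - 1) : ℚ⟦X⟧)⁻¹) ^ 2))

/-- MacMahon's `U_{2t}(q) = Σ_{0<k₁<⋯<k_t} q^{Σkᵢ} ∏ (1-q^{kᵢ})⁻²`,
defined coefficientwise by truncation. -/
def Umac (t : ℕ) : ℚ⟦X⟧ := PowerSeries.mk fun N =>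
  coeff N (∑ S ∈ (Finset.Icc 1 (N + 1)).powersetCard t,
    ∏ k ∈ S, (X ^ k * ((1 - X ^ k : ℚ⟦X⟧)⁻¹) ^ 2))

/-- `U*_{2t}(q) = Σ_{0<k₁≤⋯≤k_t} q^{Σkᵢ} ∏ (1-q^{kᵢ})⁻²`, a sum over multisets of
size `t`, defined coefficientwise by truncation. -/
def UmacStar (t : ℕ) : ℚ⟦X⟧ := PowerSeries.mk fun N =>
  coeff N (∑ m ∈ (Finset.Icc 1 (N + 1)).sym t,
    ((m : Multiset ℕ).map fun k => X ^ k * ((1 - X ^ k : ℚ⟦X⟧)⁻¹) ^ 2).prod)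

/-- `E₂(q²)`, the substitution `q ↦ q²` in `E₂`. -/
def E2sq : ℚ⟦X⟧ := PowerSeries.mk fun n => if 2 ∣ n then coeff (n / 2) E2 else 0

/-- `G₂(q) = 2 E₂(q²) - E₂(q)`. -/
def G2 : ℚ⟦X⟧ := 2 * E2sq - E2

/-!
With `S_k = Σ σ_k(n) qⁿ` we have `E₂ = 1 - 24 S₁`, `E₄ = 1 + 240 S₃` and
`G₂ = 1 + 24 S₁ - 48 S₁(q²)`, so the identity is a linear combination of three convolution
identities: Besge's formula for `S₁²`, its image under `q ↦ q²`, and a level-two formula for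
`S₁ · S₁(q²)`.

Both convolutions are sums over the positive solutions of `a x + b y = n`, evaluated by
Skoruppa's elementary method. Splitting according to `x < y`, `x > y`, `x = y` and applying the
shear `(a, b, x, y) ↦ (a - b, b, x, x + y)` (and its mirror image) shows that, for any weight `F`,
the sum over `b < a` of the shear defect
`F(a,b,x,y) + F(b,a,y,x) - F(b,a-b,x+y,x) - F(a-b,b,x,x+y)` is a divisor sum. Choosing `F` whose
defect is the symmetrised summand turns each convolution into divisor sums, and these agree after
the substitution `(d, e) ↦ (e, d)`.
-/

def quadruples (n : ℕ) : Finset (ℕ × ℕ × ℕ × ℕ) :=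
  (Icc 1 n ×ˢ Icc 1 n ×ˢ Icc 1 n ×ˢ Icc 1 n).filter fun q => q.1 * q.2.2.1 + q.2.1 * q.2.2.2 = n

lemma mem_quadruples {n a b x y : ℕ} :
    (a, b, x, y) ∈ quadruples n ↔ 0 < a ∧ 0 < b ∧ 0 < x ∧ 0 < y ∧ a * x + b * y = n := by
  simp only [quadruples, mem_filter, mem_product, mem_Icc]
  constructor
  · rintro ⟨⟨⟨ha, -⟩, ⟨hb, -⟩, ⟨hx, -⟩, ⟨hy, -⟩⟩, h⟩
    exact ⟨ha, hb, hx, hy, h⟩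
  · rintro ⟨ha, hb, hx, hy, h⟩
    refine ⟨⟨⟨ha, ?_⟩, ⟨hb, ?_⟩, ⟨hx, ?_⟩, ⟨hy, ?_⟩⟩, h⟩ <;> nlinarith

section QuadSum

variable {M : Type*}

section AddCommMonoid

variable [AddCommMonoid M]

def quadSum (n : ℕ) (F : ℕ → ℕ → ℕ → ℕ → M) : M :=
  ∑ q ∈ quadruples n, F q.1 q.2.1 q.2.2.1 q.2.2.2

lemma quadSum_add (n : ℕ) (F G : ℕ → ℕ → ℕ → ℕ → M) :
    quadSum n F + quadSum n G = quadSum n fun a b x y => F a b x y + G a b x y :=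
  sum_add_distrib.symm

lemma quadSum_swap_pairs (n : ℕ) (F : ℕ → ℕ → ℕ → ℕ → M) :
    quadSum n F = quadSum n fun a b x y => F b a y x := by
  refine sum_nbij' (fun q => (q.2.1, q.1, q.2.2.2, q.2.2.1))
    (fun q => (q.2.1, q.1, q.2.2.2, q.2.2.1)) ?_ ?_ (fun _ _ => rfl) (fun _ _ => rfl)
    (fun _ _ => rfl) <;>
  · rintro ⟨a, b, x, y⟩ h
    simp only [mem_quadruples] at h ⊢
    omega

lemma quadSum_swap_roles (n : ℕ) (F : ℕ → ℕ → ℕ → ℕ → M) :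
    quadSum n F = quadSum n fun a b x y => F x y a b := by
  refine sum_nbij' (fun q => (q.2.2.1, q.2.2.2, q.1, q.2.1))
    (fun q => (q.2.2.1, q.2.2.2, q.1, q.2.1)) ?_ ?_ (fun _ _ => rfl) (fun _ _ => rfl)
    (fun _ _ => rfl) <;>
  · rintro ⟨a, b, x, y⟩ h
    simp only [mem_quadruples] at h ⊢
    obtain ⟨ha, hb, hx, hy, h⟩ := h
    exact ⟨hx, hy, ha, hb, by rw [mul_comm x, mul_comm y]; exact h⟩

lemma quadSum_trichotomy (n : ℕ) (F : ℕ → ℕ → ℕ → ℕ → M) :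
    quadSum n F = quadSum n (fun a b x y => if y < x then F a b x y else 0)
      + quadSum n (fun a b x y => if x < y then F a b x y else 0)
      + quadSum n (fun a b x y => if x = y then F a b x y else 0) := by
  rw [quadSum_add, quadSum_add]
  refine sum_congr rfl fun q _ => ?_
  dsimp only
  split_ifs <;> first | omega | simp

lemma quadSum_ite_lt_eq_shear (n : ℕ) (F : ℕ → ℕ → ℕ → ℕ → M) :
    quadSum n (fun a b x y => if x < y then F a b x y else 0)
      = quadSum n (fun a b x y => if b < a then F (a - b) b x (x + y) else 0) := by
  simp only [quadSum, ← sum_filter]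
  refine sum_nbij' (fun q => (q.1 + q.2.1, q.2.1, q.2.2.1, q.2.2.2 - q.2.2.1))
    (fun q => (q.1 - q.2.1, q.2.1, q.2.2.1, q.2.2.1 + q.2.2.2)) ?_ ?_ ?_ ?_ ?_
  · rintro ⟨a, b, x, y⟩ h
    simp only [mem_filter, mem_quadruples] at h ⊢
    obtain ⟨⟨ha, hb, hx, hy, h⟩, hxy⟩ := h
    obtain ⟨k, rfl⟩ := Nat.exists_eq_add_of_lt hxy
    refine ⟨⟨by omega, hb, hx, by omega, ?_⟩, by omega⟩
    rw [show x + k + 1 - x = k + 1 by omega, ← h]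
    ring
  · rintro ⟨a, b, x, y⟩ h
    simp only [mem_filter, mem_quadruples] at h ⊢
    obtain ⟨⟨ha, hb, hx, hy, h⟩, hba⟩ := h
    obtain ⟨k, rfl⟩ := Nat.exists_eq_add_of_lt hba
    refine ⟨⟨by omega, hb, hx, by omega, ?_⟩, by omega⟩
    rw [show b + k + 1 - b = k + 1 by omega, ← h]
    ring
  · rintro ⟨a, b, x, y⟩ h
    simp only [mem_filter, mem_quadruples] at h
    simp only [Prod.mk.injEq, true_and]
    omega
  · rintro ⟨a, b, x, y⟩ h
    simp only [mem_filter, mem_quadruples] at h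
    simp only [Prod.mk.injEq, true_and]
    omega
  · rintro ⟨a, b, x, y⟩ h
    simp only [mem_filter, mem_quadruples] at h
    simp only [Nat.add_sub_cancel, Nat.add_sub_cancel' h.2.le]

lemma quadSum_ite_eq_eq_sum_divisorsAntidiagonal (n : ℕ) (F : ℕ → ℕ → ℕ → ℕ → M) :
    quadSum n (fun a b x y => if x = y then F a b x y else 0)
      = ∑ p ∈ n.divisorsAntidiagonal, ∑ c ∈ Ico 1 p.1, F c (p.1 - c) p.2 p.2 := by
  simp only [quadSum, ← sum_filter]
  rw [sum_sigma']
  refine sum_nbij' (fun q => ⟨(q.1 + q.2.1, q.2.2.1), q.1⟩)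
    (fun s => (s.2, s.1.1 - s.2, s.1.2, s.1.2)) ?_ ?_ ?_ ?_ ?_
  · rintro ⟨a, b, x, y⟩ h
    simp only [mem_filter, mem_quadruples] at h
    obtain ⟨⟨ha, hb, hx, hy, h⟩, rfl⟩ := h
    simp only [mem_sigma, Nat.mem_divisorsAntidiagonal, mem_Ico]
    refine ⟨⟨by rw [← h]; ring, by rw [← h]; positivity⟩, ha, by omega⟩
  · rintro ⟨⟨d, e⟩, c⟩ h
    simp only [mem_sigma, Nat.mem_divisorsAntidiagonal, mem_Ico] at h
    obtain ⟨⟨rfl, hn⟩, hc, hcd⟩ := h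
    have he : 0 < e := Nat.pos_of_ne_zero (right_ne_zero_of_mul hn)
    simp only [mem_filter, mem_quadruples]
    refine ⟨⟨hc, by omega, he, he, ?_⟩, trivial⟩
    rw [← add_mul, Nat.add_sub_cancel' hcd.le]
  · rintro ⟨a, b, x, y⟩ h
    simp only [mem_filter] at h
    simp only [Nat.add_sub_cancel_left, h.2]
  · rintro ⟨⟨d, e⟩, c⟩ h
    simp only [mem_sigma, mem_Ico] at h
    simp only [Nat.add_sub_cancel' h.2.2.le]
  · rintro ⟨a, b, x, y⟩ h
    simp only [mem_filter] at h
    simp only [Nat.add_sub_cancel_left, h.2]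

lemma quadSum_eq_shear_add_diag (n : ℕ) (F : ℕ → ℕ → ℕ → ℕ → M) :
    quadSum n F
      = quadSum n (fun a b x y => if b < a then F b (a - b) (x + y) x + F (a - b) b x (x + y) else 0)
        + ∑ p ∈ n.divisorsAntidiagonal, ∑ c ∈ Ico 1 p.1, F c (p.1 - c) p.2 p.2 := by
  rw [quadSum_trichotomy, quadSum_swap_pairs n (fun a b x y => if y < x then _ else 0),
    quadSum_ite_lt_eq_shear, quadSum_ite_lt_eq_shear, quadSum_ite_eq_eq_sum_divisorsAntidiagonal,
    quadSum_add]
  simp only [ite_add_ite, add_zero]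

lemma quadSum_eq_lt_add_diag (n : ℕ) (F : ℕ → ℕ → ℕ → ℕ → M) :
    quadSum n F
      = quadSum n (fun a b x y => if b < a then F a b x y + F b a y x else 0)
        + ∑ p ∈ n.divisorsAntidiagonal, ∑ c ∈ Ico 1 p.1, F p.2 p.2 c (p.1 - c) := by
  rw [quadSum_swap_roles, quadSum_trichotomy, quadSum_ite_eq_eq_sum_divisorsAntidiagonal,
    quadSum_swap_pairs n (fun a b x y => if x < y then _ else 0), quadSum_add,
    quadSum_swap_roles n (fun a b x y => _ + _)]
  simp only [ite_add_ite, add_zero]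

end AddCommMonoid

theorem quadSum_eq_of_shear_defect [AddCommGroup M] (n : ℕ) (F G : ℕ → ℕ → ℕ → ℕ → M)
    (h : ∀ a b x y, b < a → G a b x y + G b a y x
      = F a b x y + F b a y x - F b (a - b) (x + y) x - F (a - b) b x (x + y)) :
    quadSum n G = ∑ p ∈ n.divisorsAntidiagonal, ∑ c ∈ Ico 1 p.1,
      (F c (p.1 - c) p.2 p.2 - F p.2 p.2 c (p.1 - c) + G p.2 p.2 c (p.1 - c)) := by
  have hF := (quadSum_eq_lt_add_diag n F).symm.trans (quadSum_eq_shear_add_diag n F)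
  have hG : quadSum n (fun a b x y => if b < a then G a b x y + G b a y x else 0)
      = quadSum n (fun a b x y => if b < a then F a b x y + F b a y x else 0)
        - quadSum n (fun a b x y =>
            if b < a then F b (a - b) (x + y) x + F (a - b) b x (x + y) else 0) := by
    rw [quadSum, quadSum, quadSum, ← sum_sub_distrib]
    refine sum_congr rfl fun q _ => ?_
    split_ifs with hq
    · rw [h _ _ _ _ hq, sub_sub]
    · rw [sub_zero]
  rw [quadSum_eq_lt_add_diag n G, hG]
  simp only [sum_add_distrib, sum_sub_distrib]
  linear_combination (norm := module) hF

end QuadSum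

lemma sum_Ico_one_quadratic_add_sign {d : ℕ} (hd : 1 ≤ d) (α β γ δ : ℚ) :
    ∑ c ∈ Ico 1 d, (α + β * c + γ * c ^ 2 + δ * (-1) ^ c)
      = α * (d - 1) + β * (d ^ 2 - d) / 2 + γ * (2 * d ^ 3 - 3 * d ^ 2 + d) / 6
        - δ * (1 + (-1) ^ d) / 2 := by
  induction d, hd using Nat.le_induction with
  | base => norm_num
  | succ d hd ih =>
    rw [sum_Ico_succ_top hd, ih]
    push_cast
    ring

lemma sum_divisorsAntidiagonal_eq_of_add_swap {n : ℕ} {f g : ℕ × ℕ → ℚ}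
    (h : ∀ p, f p + f p.swap = g p + g p.swap) :
    ∑ p ∈ n.divisorsAntidiagonal, f p = ∑ p ∈ n.divisorsAntidiagonal, g p := by
  have swap (k : ℕ × ℕ → ℚ) :
      ∑ p ∈ n.divisorsAntidiagonal, k p.swap = ∑ p ∈ n.divisorsAntidiagonal, k p := by
    conv_rhs => rw [← Nat.map_swap_divisorsAntidiagonal, sum_map]
    rfl
  have h2 := sum_congr (s₁ := n.divisorsAntidiagonal) rfl fun p _ => h p
  simp only [sum_add_distrib, swap] at h2
  linarith

lemma neg_one_pow_sub_of_le {R : Type*} [Monoid R] [HasDistribNeg R] {a b : ℕ} (h : b ≤ a) :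
    (-1 : R) ^ (a - b) = (-1) ^ a * (-1) ^ b := by
  calc (-1 : R) ^ (a - b) = (-1) ^ (a - b) * ((-1) ^ b * (-1) ^ b) := by
        rw [← pow_add, ← two_mul, pow_mul, neg_one_sq, one_pow, mul_one]
    _ = (-1) ^ a * (-1) ^ b := by rw [← mul_assoc, ← pow_add, Nat.sub_add_cancel h]

lemma ite_two_dvd_eq (n : ℕ) (r : ℚ) : (if 2 ∣ n then r else 0) = r * (1 + (-1) ^ n) / 2 := by
  rcases Nat.even_or_odd n with hn | hn
  · rw [if_pos hn.two_dvd, hn.neg_one_pow]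
    ring
  · rw [if_neg (Nat.not_even_iff_odd.2 hn ∘ even_iff_two_dvd.2), hn.neg_one_pow]
    ring

theorem twelve_mul_quadSum_mul (n : ℕ) :
    12 * quadSum n (fun _ _ x y => (x * y : ℚ))
      = ∑ p ∈ n.divisorsAntidiagonal, (5 * p.1 ^ 3 + p.1 - 6 * (p.1 * p.2 * p.1) : ℚ) := by
  rw [quadSum_eq_of_shear_defect n (fun _ _ x y => (x * y / 2 - x ^ 2 : ℚ)) _
    (fun _ _ _ _ _ => by push_cast; ring), mul_sum]
  trans ∑ p ∈ n.divisorsAntidiagonal, (5 * p.1 ^ 3 - 6 * p.1 ^ 2 + p.1 - 6 * p.2 ^ 2 * (p.1 - 1) : ℚ)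
  · refine sum_congr rfl fun p hp => ?_
    calc _ = 12 * ∑ c ∈ Ico 1 p.1,
          (-(p.2 : ℚ) ^ 2 / 2 + (p.1 / 2 : ℚ) * c + (1 / 2 : ℚ) * (c : ℚ) ^ 2 + 0 * (-1 : ℚ) ^ c) := by
          congr 1
          refine sum_congr rfl fun c hc => ?_
          rw [Nat.cast_sub (mem_Ico.1 hc).2.le]
          ring
      _ = _ := by
          rw [sum_Ico_one_quadratic_add_sign
            (Nat.one_le_iff_ne_zero.2 (Nat.left_ne_zero_of_mem_divisorsAntidiagonal hp))]
          ring
  · exact sum_divisorsAntidiagonal_eq_of_add_swap fun p => by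
      simp only [Prod.fst_swap, Prod.snd_swap]
      ring

theorem twentyfour_mul_quadSum_mul_ite_two_dvd (n : ℕ) :
    24 * quadSum n (fun _ b x y => (x : ℚ) * if 2 ∣ b then (y : ℚ) else 0)
      = ∑ p ∈ n.divisorsAntidiagonal,
          (2 * p.1 ^ 3 + 8 * (if 2 ∣ p.2 then (p.1 : ℚ) ^ 3 else 0) + p.1 - 3 * (p.1 * p.2 * p.1)
            + (if 2 ∣ p.2 then (p.1 : ℚ) else 0)
            - 6 * (p.1 * p.2 * if 2 ∣ p.2 then (p.1 : ℚ) else 0)) := by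
  -- `F` solves the linear system "shear defect of `F` = symmetrised summand" within the span of
  -- `{1, (-1)^a, (-1)^b, (-1)^(a+b)} ⊗ {x², x y, y²}`.
  rw [quadSum_eq_of_shear_defect n (fun a b x y => ((-4) * x ^ 2 + 2 * x * y
      + (-1) ^ a * (-2 * x ^ 2 + 2 * x * y - y ^ 2) - (-1) ^ (a + b) * x ^ 2 : ℚ) / 8) _
    (fun a b x y h => by
      simp only [ite_two_dvd_eq, Nat.add_sub_cancel' h.le, Nat.sub_add_cancel h.le,
        neg_one_pow_sub_of_le h.le]
      push_cast
      ring), mul_sum]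
  trans ∑ p ∈ n.divisorsAntidiagonal, (3 * ((-1) ^ p.2 * p.1 ^ 2 - 2 * p.2 ^ 2 - (-1) ^ p.1 * p.2 ^ 2)
      * (p.1 - 1) + 3 * p.1 * (p.1 ^ 2 - p.1) + (3 + (-1) ^ p.2) * (2 * p.1 ^ 3 - 3 * p.1 ^ 2 + p.1) / 2
      + 3 * p.2 ^ 2 * (1 + (-1) ^ p.1) / 2 : ℚ)
  · refine sum_congr rfl fun p hp => ?_
    calc _ = 24 * ∑ c ∈ Ico 1 p.1,
          (((-1) ^ p.2 * p.1 ^ 2 - 2 * p.2 ^ 2 - (-1) ^ p.1 * p.2 ^ 2) / 8 + (p.1 / 4 : ℚ) * c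
            + ((3 + (-1) ^ p.2) / 8 : ℚ) * (c : ℚ) ^ 2 + (-(p.2 : ℚ) ^ 2 / 8) * (-1 : ℚ) ^ c) := by
          congr 1
          refine sum_congr rfl fun c hc => ?_
          have hcd := (mem_Ico.1 hc).2.le
          rw [ite_two_dvd_eq, Nat.cast_sub hcd, Nat.add_sub_cancel' hcd, ← two_mul, pow_mul,
            neg_one_sq, one_pow]
          ring
      _ = _ := by
          rw [sum_Ico_one_quadratic_add_sign
            (Nat.one_le_iff_ne_zero.2 (Nat.left_ne_zero_of_mem_divisorsAntidiagonal hp))]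
          ring
  · exact sum_divisorsAntidiagonal_eq_of_add_swap fun p => by
      simp only [Prod.fst_swap, Prod.snd_swap, ite_two_dvd_eq]
      ring

section DivisorSeries

variable {R : Type*} [CommRing R]

def divisorSeries (f : ℕ → ℕ → R) : R⟦X⟧ :=
  PowerSeries.mk fun n => ∑ p ∈ n.divisorsAntidiagonal, f p.1 p.2

lemma coeff_divisorSeries (f : ℕ → ℕ → R) (n : ℕ) :
    coeff n (divisorSeries f) = ∑ p ∈ n.divisorsAntidiagonal, f p.1 p.2 :=
  coeff_mk _ _

lemma coeff_divisorSeries_mul (φ ψ : ℕ → ℕ → R) (n : ℕ) :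
    coeff n (divisorSeries φ * divisorSeries ψ) = quadSum n fun a b x y => φ x a * ψ y b := by
  simp only [coeff_mul, coeff_divisorSeries, sum_mul_sum, ← sum_product']
  rw [sum_sigma']
  refine sum_nbij' (fun s => (s.2.1.2, s.2.2.2, s.2.1.1, s.2.2.1))
    (fun q => ⟨(q.2.2.1 * q.1, q.2.2.2 * q.2.1), ((q.2.2.1, q.1), (q.2.2.2, q.2.1))⟩)
    ?_ ?_ ?_ (fun _ _ => rfl) (fun _ _ => rfl)
  · rintro ⟨⟨u, v⟩, ⟨x, a⟩, ⟨y, b⟩⟩ h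
    simp only [mem_sigma, HasAntidiagonal.mem_antidiagonal, mem_product,
      Nat.mem_divisorsAntidiagonal] at h
    obtain ⟨huv, ⟨rfl, hu⟩, ⟨rfl, hv⟩⟩ := h
    obtain ⟨hx, ha⟩ := mul_ne_zero_iff.1 hu
    obtain ⟨hy, hb⟩ := mul_ne_zero_iff.1 hv
    simp only [mem_quadruples]
    exact ⟨by omega, by omega, by omega, by omega, by rw [← huv]; ring⟩
  · rintro ⟨a, b, x, y⟩ h
    simp only [mem_quadruples] at h
    obtain ⟨ha, hb, hx, hy, h⟩ := h
    simp only [mem_sigma, HasAntidiagonal.mem_antidiagonal, mem_product,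
      Nat.mem_divisorsAntidiagonal]
    exact ⟨by rw [← h]; ring, ⟨trivial, by positivity⟩, ⟨trivial, by positivity⟩⟩
  · rintro ⟨⟨u, v⟩, ⟨x, a⟩, ⟨y, b⟩⟩ h
    simp only [mem_sigma, HasAntidiagonal.mem_antidiagonal, mem_product,
      Nat.mem_divisorsAntidiagonal] at h
    obtain ⟨-, ⟨rfl, -⟩, ⟨rfl, -⟩⟩ := h
    rfl

lemma expand_divisorSeries (k : ℕ) (hk : k ≠ 0) (f : ℕ → ℕ → R) :
    expand k hk (divisorSeries f) = divisorSeries fun d e => if k ∣ e then f d (e / k) else 0 := by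
  ext n
  rw [coeff_expand, coeff_divisorSeries, coeff_divisorSeries]
  split_ifs with hn
  · obtain ⟨m, rfl⟩ := hn
    rw [← sum_filter, Nat.mul_div_cancel_left m (Nat.pos_of_ne_zero hk)]
    refine sum_nbij' (fun p => (p.1, k * p.2)) (fun p => (p.1, p.2 / k)) ?_ ?_ ?_ ?_ ?_
    · rintro ⟨d, e⟩ h
      simp only [Nat.mem_divisorsAntidiagonal, mem_filter] at h ⊢
      exact ⟨⟨by rw [← h.1]; ring, mul_ne_zero hk h.2⟩, dvd_mul_right k e⟩
    · rintro ⟨d, e⟩ h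
      simp only [Nat.mem_divisorsAntidiagonal, mem_filter] at h ⊢
      obtain ⟨⟨hde, hm⟩, e, rfl⟩ := h
      rw [Nat.mul_div_cancel_left e (Nat.pos_of_ne_zero hk)]
      refine ⟨Nat.eq_of_mul_eq_mul_left (Nat.pos_of_ne_zero hk) ?_, right_ne_zero_of_mul hm⟩
      rw [← hde]
      ring
    · intro p _
      simp only [Nat.mul_div_cancel_left p.2 (Nat.pos_of_ne_zero hk)]
    · rintro ⟨d, e⟩ h
      simp only [mem_filter] at h
      simp only [Nat.mul_div_cancel' h.2]
    · intro p _
      simp only [Nat.mul_div_cancel_left p.2 (Nat.pos_of_ne_zero hk)]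
  · refine (sum_eq_zero fun p hp => ?_).symm
    rw [Nat.mem_divisorsAntidiagonal] at hp
    rw [if_neg fun h => hn (hp.1 ▸ h.mul_left p.1)]

end DivisorSeries

lemma coeff_ofNat_mul {R : Type*} [Semiring R] (a : ℕ) [a.AtLeastTwo] (f : R⟦X⟧) (n : ℕ) :
    coeff n ((no_index (OfNat.ofNat a) : R⟦X⟧) * f) = OfNat.ofNat a * coeff n f := by
  rw [← map_ofNat C a, coeff_C_mul]

lemma coeff_Dq (f : ℚ⟦X⟧) (n : ℕ) : coeff n (Dq f) = n * coeff n f :=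
  coeff_mk _ _

lemma Dq_divisorSeries (f : ℕ → ℕ → ℚ) :
    Dq (divisorSeries f) = divisorSeries fun d e => d * e * f d e := by
  ext n
  rw [coeff_Dq, coeff_divisorSeries, coeff_divisorSeries, mul_sum]
  refine sum_congr rfl fun p hp => ?_
  rw [← (Nat.mem_divisorsAntidiagonal.1 hp).1]
  push_cast
  ring

lemma Dq_expand (k : ℕ) (hk : k ≠ 0) (f : ℚ⟦X⟧) :
    Dq (expand k hk f) = k * expand k hk (Dq f) := by
  ext n
  rw [← map_natCast C k, coeff_C_mul, coeff_Dq, coeff_expand, coeff_expand]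
  split_ifs with hn
  · rw [coeff_Dq, Nat.cast_div hn (Nat.cast_ne_zero.2 hk)]
    field_simp
  · simp

def sigmaSeries (k : ℕ) : ℚ⟦X⟧ := divisorSeries fun d _ => (d : ℚ) ^ k

lemma E2_eq : E2 = 1 - 24 * sigmaSeries 1 := by
  ext n
  rw [map_sub, coeff_ofNat_mul, sigmaSeries, coeff_divisorSeries, coeff_one, E2, coeff_mk,
    Nat.sum_divisorsAntidiagonal fun d _ => (d : ℚ) ^ 1]
  split_ifs with hn
  · simp [hn]
  · simp

lemma E4_eq : E4 = 1 + 240 * sigmaSeries 3 := by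
  ext n
  rw [map_add, coeff_ofNat_mul, sigmaSeries, coeff_divisorSeries, coeff_one, E4, coeff_mk,
    Nat.sum_divisorsAntidiagonal fun d _ => (d : ℚ) ^ 3]
  split_ifs with hn
  · simp [hn]
  · simp

lemma E2sq_eq : E2sq = expand 2 two_ne_zero E2 := by
  ext n
  rw [E2sq, coeff_mk, coeff_expand]

theorem sigmaSeries_one_sq :
    12 * sigmaSeries 1 ^ 2 = 5 * sigmaSeries 3 + sigmaSeries 1 - 6 * Dq (sigmaSeries 1) := by
  ext n
  simp only [sigmaSeries, pow_two, Dq_divisorSeries, map_add, map_sub, coeff_ofNat_mul,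
    coeff_divisorSeries_mul, coeff_divisorSeries, pow_one]
  rw [twelve_mul_quadSum_mul]
  simp only [sum_add_distrib, sum_sub_distrib, mul_sum]

theorem sigmaSeries_one_mul_expand :
    24 * (sigmaSeries 1 * expand 2 two_ne_zero (sigmaSeries 1))
      = 2 * sigmaSeries 3 + 8 * expand 2 two_ne_zero (sigmaSeries 3) + sigmaSeries 1
        - 3 * Dq (sigmaSeries 1) + expand 2 two_ne_zero (sigmaSeries 1)
        - 6 * Dq (expand 2 two_ne_zero (sigmaSeries 1)) := by
  ext n
  simp only [sigmaSeries, expand_divisorSeries, Dq_divisorSeries, map_add, map_sub,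
    coeff_ofNat_mul, coeff_divisorSeries_mul, coeff_divisorSeries, pow_one]
  rw [twentyfour_mul_quadSum_mul_ite_two_dvd]
  simp only [sum_add_distrib, sum_sub_distrib, mul_sum]

/-- `D(G₂) = (E₂G₂ - 2G₂² + E₄)/6`. -/
theorem D_G2 : Dq G2 = (1 / 6 : ℚ) • (E2 * G2 - 2 * G2 ^ 2 + E4) := by
  set E := expand (R := ℚ) 2 two_ne_zero
  have hG2 : G2 = 1 + 24 * sigmaSeries 1 - 48 * E (sigmaSeries 1) := by
    rw [G2, E2sq_eq, E2_eq]
    simp only [map_sub, map_one, map_mul, map_ofNat]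
    ring
  have hDG2 : Dq G2 = 24 * Dq (sigmaSeries 1) - 48 * Dq (E (sigmaSeries 1)) := by
    ext n
    simp only [hG2, coeff_Dq, map_add, map_sub, coeff_ofNat_mul, coeff_one]
    split_ifs with hn
    · simp [hn]
    · ring
  have hsq_expand : 12 * E (sigmaSeries 1) ^ 2
      = 5 * E (sigmaSeries 3) + E (sigmaSeries 1) - 3 * Dq (E (sigmaSeries 1)) := by
    have h := congrArg E sigmaSeries_one_sq
    simp only [map_add, map_sub, map_mul, map_pow, map_ofNat] at h
    rw [Dq_expand, Nat.cast_ofNat]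
    linear_combination h
  have h6 : 6 * Dq G2 = E2 * G2 - 2 * G2 ^ 2 + E4 := by
    rw [hDG2, hG2, E2_eq, E4_eq]
    linear_combination 144 * sigmaSeries_one_sq + 384 * hsq_expand - 240 * sigmaSeries_one_mul_expand
  rw [← h6, smul_eq_C_mul, ← mul_assoc, ← map_ofNat C 6, ← map_mul]
  norm_num
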